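/- Let 0 < μ ≤ L, let f be μ-strongly convex with L-Lipschitz gradient on ℝⁿ, with minimizer x⋆, and let 0 < s ≤ μ/(16L²). Then the iterates of the symplectic Euler scheme for the high-resolution heavy-ball ODE satisfy, for every k ≥ 0, f(x_k) − f(x⋆) ≤ ( (3 + 8√(μs) + 8μs)sL/(1 + √(μs))² + 2μ/L + (1 + √(μs))/2 ) · L‖x₀ − x⋆‖² / (1 + √(μs)/4)^k. -/

import Mathlib

/-!
Discrete Lyapunov argument. With `a = √(μs)`, the energy
`E_k = (1 + a)(f x_k - f x⋆) + ‖v_k‖²/4 + ‖v_k + 2√μ (x_{k+1} - x⋆)‖²/4`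
contracts by the factor `1 + a/4` at each step: expanding the two squared norms along the
scheme and bounding `f x_{k+1} - f x_k` by convexity leaves cross terms in `∇f(x_{k+1})`, which
strong convexity, Young's inequality and `‖∇f‖² ≤ 2L (f - f x⋆)` control as soon as
`sL ≤ a/4`, i.e. `s ≤ μ/(16L²)`. The initial energy is bounded through `‖∇f x₀‖ ≤ L‖x₀ - x⋆‖`
and `f x₀ - f x⋆ ≤ L‖x₀ - x⋆‖²/2`, and `E_k` dominates `f x_k - f x⋆`.
-/

open scoped RealInnerProductSpace

theorem norm_smul_add_smul_sq_le {E : Type*} [SeminormedAddCommGroup E] [NormedSpace ℝ E]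
    (a b : ℝ) (u w : E) :
    ‖a • u + b • w‖ ^ 2 ≤ 2 * a ^ 2 * ‖u‖ ^ 2 + 2 * b ^ 2 * ‖w‖ ^ 2 := by
  calc ‖a • u + b • w‖ ^ 2 ≤ (‖a • u‖ + ‖b • w‖) ^ 2 := by gcongr; exact norm_add_le _ _
    _ ≤ 2 * (‖a • u‖ ^ 2 + ‖b • w‖ ^ 2) := add_sq_le
    _ = _ := by simp only [norm_smul, mul_pow, Real.norm_eq_abs, sq_abs]; ring

section InnerProductSpace

variable {E : Type*} [NormedAddCommGroup E] [InnerProductSpace ℝ E]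

theorem norm_sq_sub_norm_sq_real (u w : E) :
    ‖u‖ ^ 2 - ‖w‖ ^ 2 = 2 * ⟪u, u - w⟫ - ‖u - w‖ ^ 2 := by
  rw [norm_sub_sq_real, inner_sub_right, real_inner_self_eq_norm_sq]; ring

variable [CompleteSpace E] {f : E → ℝ} {f' : E → E} {L : ℝ}

theorem IsLocalMin.hasGradientAt_eq_zero {a g : E} (h : IsLocalMin f a) (hf : HasGradientAt f g a) :
    g = 0 :=
  (InnerProductSpace.toDual ℝ E).map_eq_zero_iff.1 (h.hasFDerivAt_eq_zero hf)

theorem le_add_inner_add_of_lipschitz_gradient (hgrad : ∀ z, HasGradientAt f (f' z) z)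
    (hLip : ∀ z w, ‖f' z - f' w‖ ≤ L * ‖z - w‖) (z w : E) :
    f w ≤ f z + ⟪f' z, w - z⟫ + L / 2 * ‖w - z‖ ^ 2 := by
  set d := w - z
  let ψ : ℝ → ℝ := fun t => f (z + t • d) - t * ⟪f' z, d⟫ - L / 2 * t ^ 2 * ‖d‖ ^ 2
  have hψ : ∀ t, HasDerivAt ψ (⟪f' (z + t • d) - f' z, d⟫ - L * t * ‖d‖ ^ 2) t := by
    intro t
    have hline : HasDerivAt (fun t : ℝ => z + t • d) d t := by
      simpa using ((hasDerivAt_id t).smul_const d).const_add z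
    have hf := (hasGradientAt_iff_hasFDerivAt.mp (hgrad (z + t • d))).comp_hasDerivAt t hline
    simp only [InnerProductSpace.toDual_apply_apply] at hf
    refine ((hf.sub ((hasDerivAt_id t).mul_const ⟪f' z, d⟫)).sub
      (((hasDerivAt_pow 2 t).const_mul (L / 2)).mul_const (‖d‖ ^ 2))).congr_deriv ?_
    rw [inner_sub_left]; push_cast; ring
  have hanti : AntitoneOn ψ (Set.Icc 0 1) := by
    refine antitoneOn_of_deriv_nonpos (convex_Icc 0 1)
      (fun t _ => (hψ t).continuousAt.continuousWithinAt)
      (fun t _ => (hψ t).differentiableAt.differentiableWithinAt) fun t ht => ?_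
    rw [interior_Icc] at ht
    rw [(hψ t).deriv, sub_nonpos]
    calc ⟪f' (z + t • d) - f' z, d⟫ ≤ ‖f' (z + t • d) - f' z‖ * ‖d‖ := real_inner_le_norm _ _
      _ ≤ L * ‖t • d‖ * ‖d‖ := by gcongr; simpa using hLip (z + t • d) z
      _ = L * t * ‖d‖ ^ 2 := by rw [norm_smul, Real.norm_of_nonneg ht.1.le]; ring
  have h10 : ψ 1 ≤ ψ 0 := hanti (by simp) (by simp) zero_le_one
  have hψ1 : ψ 1 = f w - ⟪f' z, d⟫ - L / 2 * ‖d‖ ^ 2 := by simp [ψ, d]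
  have hψ0 : ψ 0 = f z := by simp [ψ]
  linarith

theorem sq_norm_le_of_lipschitz_gradient (hL : 0 < L) (hgrad : ∀ z, HasGradientAt f (f' z) z)
    (hLip : ∀ z w, ‖f' z - f' w‖ ≤ L * ‖z - w‖) {xstar : E} (hmin : ∀ z, f xstar ≤ f z) (z : E) :
    ‖f' z‖ ^ 2 ≤ 2 * L * (f z - f xstar) := by
  have h := le_add_inner_add_of_lipschitz_gradient hgrad hLip z (z - L⁻¹ • f' z)
  rw [sub_sub_cancel_left, inner_neg_right, real_inner_smul_right, real_inner_self_eq_norm_sq,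
    norm_neg, norm_smul, Real.norm_of_nonneg (inv_nonneg.2 hL.le)] at h
  have key : f xstar ≤ f z - ‖f' z‖ ^ 2 / (2 * L) := by
    refine (hmin _).trans (h.trans_eq ?_)
    field_simp
    ring
  calc ‖f' z‖ ^ 2 = 2 * L * (‖f' z‖ ^ 2 / (2 * L)) := by field_simp
    _ ≤ 2 * L * (f z - f xstar) := by gcongr; linarith

end InnerProductSpace

theorem hb_step_size_bounds {μ L s : ℝ} (hμ : 0 < μ) (hμL : μ ≤ L) (hs0 : 0 < s)
    (hs : s ≤ μ / (16 * L ^ 2)) : s * L ≤ √(μ * s) / 4 ∧ √(μ * s) ≤ 1 / 4 := by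
  have hL : 0 < L := hμ.trans_le hμL
  have hsL2 : 16 * s * L ^ 2 ≤ μ := by
    rw [le_div_iff₀ (by positivity)] at hs; linarith
  have hsL : s * L ≤ √(μ * s) / 4 := by
    rw [le_div_iff₀ four_pos]
    apply Real.le_sqrt_of_sq_le
    nlinarith [mul_le_mul_of_nonneg_left hsL2 hs0.le]
  refine ⟨hsL, ?_⟩
  have ha2 : √(μ * s) ^ 2 ≤ √(μ * s) / 4 := by
    rw [Real.sq_sqrt (mul_pos hμ hs0).le]
    nlinarith [mul_le_mul_of_nonneg_right hμL hs0.le]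
  nlinarith [Real.sqrt_nonneg (μ * s)]

section HeavyBall

variable {E : Type*} [NormedAddCommGroup E] [InnerProductSpace ℝ E]

/-- The Lyapunov function `(1 + √(μs)) (f x_k - f x⋆) + ‖v_k‖²/4 + ‖v_k + 2√μ (x_{k+1} - x⋆)‖²/4`
of the paper, written in the state `(y, u) = (x_k, v_k)` by substituting `x_{k+1} = x_k + √s v_k`
(for `μ, s ≥ 0`). -/
noncomputable def hbLyapunov (f : E → ℝ) (xstar : E) (μ s : ℝ) (y u : E) : ℝ :=
  (1 + √(μ * s)) * (f y - f xstar) + ‖u‖ ^ 2 / 4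
    + ‖(1 + 2 * √(μ * s)) • u + (2 * √μ) • (y - xstar)‖ ^ 2 / 4

variable {f : E → ℝ} {f' : E → E} {xstar : E} {μ s L : ℝ}

theorem sub_le_hbLyapunov (hmin : ∀ z, f xstar ≤ f z) (y u : E) :
    f y - f xstar ≤ hbLyapunov f xstar μ s y u := by
  have hgap : 0 ≤ f y - f xstar := sub_nonneg.2 (hmin y)
  unfold hbLyapunov
  linarith [mul_nonneg (Real.sqrt_nonneg (μ * s)) hgap, sq_nonneg ‖u‖,
    sq_nonneg ‖(1 + 2 * √(μ * s)) • u + (2 * √μ) • (y - xstar)‖]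

theorem hbLyapunov_sub_le (hμ : 0 ≤ μ) (hs : 0 ≤ s) {y y₁ u u₁ : E}
    (hconv : f y₁ + ⟪f' y₁, y - y₁⟫ ≤ f y) (hy : y₁ - y = √s • u)
    (hu : u₁ - u = -((2 * √(μ * s)) • u₁) - (√s * (1 + √(μ * s))) • f' y₁) :
    hbLyapunov f xstar μ s y₁ u₁ - hbLyapunov f xstar μ s y u ≤
      √s * √(μ * s) * (1 + √(μ * s)) * ⟪f' y₁, u₁⟫
        + 3 / 4 * s * (1 + √(μ * s)) ^ 2 * ‖f' y₁‖ ^ 2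
        - √(μ * s) * ‖u₁‖ ^ 2 - √(μ * s) * (1 + √(μ * s)) * ⟪f' y₁, y₁ - xstar⟫ := by
  set a := √(μ * s)
  set r := √s
  set g := f' y₁
  have hra : √μ * r = a := (Real.sqrt_mul hμ s).symm
  have hr2 : r ^ 2 = s := Real.sq_sqrt hs
  set w := (1 + 2 * a) • u + (2 * √μ) • (y - xstar)
  set w₁ := (1 + 2 * a) • u₁ + (2 * √μ) • (y₁ - xstar)
  have hu' : u = (1 + 2 * a) • u₁ + (r * (1 + a)) • g := by
    calc u = u₁ - (u₁ - u) := by abel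
      _ = _ := by rw [hu]; module
  have hw : w₁ - w = -((r * (1 + a)) • g) := by
    calc w₁ - w = (1 + 2 * a) • (u₁ - u) + (2 * √μ) • (y₁ - y) := by module
      _ = (u₁ - u) + (2 * a) • u₁ := by rw [hy, smul_smul, mul_assoc, hra]; module
      _ = _ := by rw [hu]; module
  have hvel : ‖u₁‖ ^ 2 - ‖u‖ ^ 2 ≤ -4 * a * ‖u₁‖ ^ 2 - 2 * r * (1 + a) * ⟪g, u₁⟫ := by
    have h := norm_sq_sub_norm_sq_real u₁ u
    rw [hu, inner_sub_right, inner_neg_right, real_inner_smul_right, real_inner_smul_right,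
      real_inner_self_eq_norm_sq, real_inner_comm] at h
    nlinarith [sq_nonneg ‖u₁ - u‖]
  have hmom : ‖w₁‖ ^ 2 - ‖w‖ ^ 2 = -2 * r * (1 + a) * (1 + 2 * a) * ⟪g, u₁⟫
      - 4 * a * (1 + a) * ⟪g, y₁ - xstar⟫ - s * (1 + a) ^ 2 * ‖g‖ ^ 2 := by
    rw [norm_sq_sub_norm_sq_real, hw, norm_neg, norm_smul, mul_pow, Real.norm_eq_abs, sq_abs,
      inner_neg_right, real_inner_smul_right, inner_add_left, real_inner_smul_left,
      real_inner_smul_left, real_inner_comm u₁, real_inner_comm (y₁ - xstar), ← hr2, ← hra]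
    ring
  have hpot : f y₁ - f y ≤ r * (1 + 2 * a) * ⟪g, u₁⟫ + s * (1 + a) * ‖g‖ ^ 2 := by
    have h : ⟪g, y₁ - y⟫ = r * (1 + 2 * a) * ⟪g, u₁⟫ + s * (1 + a) * ‖g‖ ^ 2 := by
      rw [hy, real_inner_smul_right, hu', inner_add_right, real_inner_smul_right,
        real_inner_smul_right, real_inner_self_eq_norm_sq, ← hr2]
      ring
    rw [← neg_sub y₁ y, inner_neg_right] at hconv
    linarith
  have hpot' := mul_le_mul_of_nonneg_left hpot (by positivity : (0 : ℝ) ≤ 1 + a)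
  unfold hbLyapunov
  linarith

theorem hbLyapunov_step (hμ : 0 ≤ μ) (hs : 0 ≤ s) (hsL : s * L ≤ √(μ * s) / 4)
    (ha : √(μ * s) ≤ 1 / 4) (hsc : ∀ z w, f w ≥ f z + ⟪f' z, w - z⟫ + μ / 2 * ‖w - z‖ ^ 2)
    (hmin : ∀ z, f xstar ≤ f z) (hgrad_sq : ∀ z, ‖f' z‖ ^ 2 ≤ 2 * L * (f z - f xstar))
    {y y₁ u u₁ : E} (hy : y₁ - y = √s • u)
    (hu : u₁ - u = -((2 * √(μ * s)) • u₁) - (√s * (1 + √(μ * s))) • f' y₁) :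
    (1 + √(μ * s) / 4) * hbLyapunov f xstar μ s y₁ u₁ ≤ hbLyapunov f xstar μ s y u := by
  have hconv : f y₁ + ⟪f' y₁, y - y₁⟫ ≤ f y := by
    linarith [hsc y₁ y, mul_nonneg hμ (sq_nonneg ‖y - y₁‖)]
  have hdiff := hbLyapunov_sub_le (xstar := xstar) hμ hs hconv hy hu
  set a := √(μ * s)
  set r := √s
  set g := f' y₁
  set X := y₁ - xstar
  set F := f y₁ - f xstar
  have ha0 : 0 ≤ a := Real.sqrt_nonneg _
  have hF : 0 ≤ F := sub_nonneg.2 (hmin y₁)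
  have hstrong : F + μ / 2 * ‖X‖ ^ 2 ≤ ⟪g, X⟫ := by
    have h := hsc y₁ xstar
    rw [← neg_sub y₁ xstar, inner_neg_right, norm_neg] at h
    linarith
  have hyoung : r * ⟪g, u₁⟫ ≤ (s * ‖g‖ ^ 2 + ‖u₁‖ ^ 2) / 2 := by
    nlinarith [real_inner_le_norm g u₁, sq_nonneg (r * ‖g‖ - ‖u₁‖), Real.sq_sqrt hs,
      Real.sqrt_nonneg s]
  have hg : s * ‖g‖ ^ 2 ≤ a / 2 * F := by
    nlinarith [hgrad_sq y₁, mul_le_mul_of_nonneg_right hsL hF]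
  have hw₁ : ‖(1 + 2 * a) • u₁ + (2 * √μ) • X‖ ^ 2 ≤ 2 * (1 + 2 * a) ^ 2 * ‖u₁‖ ^ 2
      + 8 * μ * ‖X‖ ^ 2 := by
    refine (norm_smul_add_smul_sq_le _ _ _ _).trans_eq ?_
    rw [mul_pow, Real.sq_sqrt hμ]
    ring
  -- After the combination, `F`, `‖u₁‖²` and `‖X‖²` are left with the coefficients
  -- `-a(1+a)(3-5a)/8`, `-a(5/16 - a - a²/2)` and `-a²μ/2`, all nonpositive as `a ≤ 1/4`.
  have hcoefF : 0 ≤ a * (1 + a) * (3 - 5 * a) * F := by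
    have : 0 ≤ 3 - 5 * a := by linarith
    positivity
  have hcoefU : 0 ≤ a * (5 / 16 - a - a ^ 2 / 2) * ‖u₁‖ ^ 2 := by
    have : 0 ≤ 5 / 16 - a - a ^ 2 / 2 := by nlinarith
    positivity
  have hcoefX : 0 ≤ a ^ 2 * μ * ‖X‖ ^ 2 := by positivity
  unfold hbLyapunov at hdiff ⊢
  linarith [mul_le_mul_of_nonneg_left hyoung (by positivity : 0 ≤ a * (1 + a)),
    mul_le_mul_of_nonneg_left hstrong (by positivity : 0 ≤ a * (1 + a)),
    mul_le_mul_of_nonneg_left hw₁ (by positivity : 0 ≤ a / 16),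
    mul_le_mul_of_nonneg_left hg (by positivity : 0 ≤ 3 / 4 * (1 + a) ^ 2 + a * (1 + a) / 2)]

theorem hbLyapunov_initial_le [CompleteSpace E] (hμ : 0 ≤ μ) (hs : 0 ≤ s) (hL : 0 < L)
    (hgrad : ∀ z, HasGradientAt f (f' z) z) (hLip : ∀ z w, ‖f' z - f' w‖ ≤ L * ‖z - w‖)
    (hstar : f' xstar = 0) {y u : E} (hu : u = -((2 * √s / (1 + √(μ * s))) • f' y)) :
    hbLyapunov f xstar μ s y u ≤
      ((3 + 8 * √(μ * s) + 8 * (μ * s)) * s * L / (1 + √(μ * s)) ^ 2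
        + 2 * μ / L + (1 + √(μ * s)) / 2) * (L * ‖y - xstar‖ ^ 2) := by
  set a := √(μ * s)
  have ha0 : 0 ≤ a := Real.sqrt_nonneg _
  have hgap : f y - f xstar ≤ L / 2 * ‖y - xstar‖ ^ 2 := by
    have h := le_add_inner_add_of_lipschitz_gradient hgrad hLip xstar y
    rw [hstar, inner_zero_left] at h
    linarith
  have hg : ‖f' y‖ ≤ L * ‖y - xstar‖ := by simpa [hstar] using hLip y xstar
  have hu2 : ‖u‖ ^ 2 ≤ 4 * s * L ^ 2 * ‖y - xstar‖ ^ 2 / (1 + a) ^ 2 :=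
    calc ‖u‖ ^ 2 = 4 * s / (1 + a) ^ 2 * ‖f' y‖ ^ 2 := by
          rw [hu, norm_neg, norm_smul, mul_pow, Real.norm_eq_abs, sq_abs, div_pow, mul_pow,
            Real.sq_sqrt hs]
          ring
      _ ≤ 4 * s / (1 + a) ^ 2 * (L * ‖y - xstar‖) ^ 2 := by gcongr
      _ = _ := by ring
  have hw : ‖(1 + 2 * a) • u + (2 * √μ) • (y - xstar)‖ ^ 2 ≤ 2 * (1 + 2 * a) ^ 2 * ‖u‖ ^ 2
      + 8 * μ * ‖y - xstar‖ ^ 2 := by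
    refine (norm_smul_add_smul_sq_le _ _ _ _).trans_eq ?_
    rw [mul_pow, Real.sq_sqrt hμ]
    ring
  calc hbLyapunov f xstar μ s y u
      ≤ (1 + a) * (L / 2 * ‖y - xstar‖ ^ 2) + (3 + 8 * a + 8 * a ^ 2) / 4 * ‖u‖ ^ 2
        + 2 * μ * ‖y - xstar‖ ^ 2 := by
        unfold hbLyapunov
        nlinarith [mul_le_mul_of_nonneg_left hgap (by positivity : 0 ≤ 1 + a)]
    _ ≤ (1 + a) * (L / 2 * ‖y - xstar‖ ^ 2)
        + (3 + 8 * a + 8 * a ^ 2) / 4 * (4 * s * L ^ 2 * ‖y - xstar‖ ^ 2 / (1 + a) ^ 2)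
        + 2 * μ * ‖y - xstar‖ ^ 2 := by gcongr
    _ = _ := by
        rw [Real.sq_sqrt (mul_nonneg hμ hs)]
        field_simp
        ring

end HeavyBall

theorem stmt11
    {n : ℕ} (μ L : ℝ) (hμ : 0 < μ) (hμL : μ ≤ L)
    (f : EuclideanSpace ℝ (Fin n) → ℝ)
    (f' : EuclideanSpace ℝ (Fin n) → EuclideanSpace ℝ (Fin n))
    (hgrad : ∀ z, HasGradientAt f (f' z) z)
    (hLip : ∀ z w, ‖f' z - f' w‖ ≤ L * ‖z - w‖)
    (hsc : ∀ z w, f w ≥ f z + ⟪f' z, w - z⟫ + μ / 2 * ‖w - z‖ ^ 2)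
    (xstar : EuclideanSpace ℝ (Fin n)) (hmin : ∀ z, f xstar ≤ f z)
    (s : ℝ) (hs0 : 0 < s) (hs : s ≤ μ / (16 * L ^ 2))
    (x v : ℕ → EuclideanSpace ℝ (Fin n))
    (hv0 : v 0 = -((2 * Real.sqrt s / (1 + Real.sqrt (μ * s))) • f' (x 0)))
    (hx : ∀ k : ℕ, x (k + 1) - x k = Real.sqrt s • v k)
    (hv : ∀ k : ℕ, v (k + 1) - v k = -((2 * Real.sqrt (μ * s)) • v (k + 1))
      - (Real.sqrt s * (1 + Real.sqrt (μ * s))) • f' (x (k + 1)))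
    : ∀ k : ℕ, f (x k) - f xstar ≤
      ((3 + 8 * Real.sqrt (μ * s) + 8 * (μ * s)) * s * L / (1 + Real.sqrt (μ * s)) ^ 2
        + 2 * μ / L + (1 + Real.sqrt (μ * s)) / 2) *
      (L * ‖x 0 - xstar‖ ^ 2) / (1 + Real.sqrt (μ * s) / 4) ^ k := by
  intro k
  have hL : 0 < L := hμ.trans_le hμL
  obtain ⟨hsL, ha⟩ := hb_step_size_bounds hμ hμL hs0 hs
  have hstar : f' xstar = 0 :=
    IsLocalMin.hasGradientAt_eq_zero (Filter.Eventually.of_forall hmin) (hgrad xstar)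
  have hq : 0 < 1 + √(μ * s) / 4 := by positivity
  have hdecay : hbLyapunov f xstar μ s (x k) (v k)
      ≤ (1 + √(μ * s) / 4)⁻¹ ^ k * hbLyapunov f xstar μ s (x 0) (v 0) := by
    refine le_geom (u := fun j => hbLyapunov f xstar μ s (x j) (v j)) (by positivity) k
      fun j _ => (le_inv_mul_iff₀ hq).2 ?_
    exact hbLyapunov_step hμ.le hs0.le hsL ha hsc hmin
      (sq_norm_le_of_lipschitz_gradient hL hgrad hLip hmin) (hx j) (hv j)
  calc f (x k) - f xstar ≤ hbLyapunov f xstar μ s (x k) (v k) := sub_le_hbLyapunov hmin _ _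
    _ ≤ (1 + √(μ * s) / 4)⁻¹ ^ k * hbLyapunov f xstar μ s (x 0) (v 0) := hdecay
    _ ≤ _ := by
      rw [inv_pow, inv_mul_eq_div]
      gcongr
      exact hbLyapunov_initial_le hμ.le hs0.le hL hgrad hLip hstar hv0
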